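/- For points a, b, c, d, p all on the unit circle in ℂ (a, b, c, d pairwise distinct), the feet of the perpendiculars from p onto the four Simson lines of the triangles bcd, acd, abd, abc are collinear (this line is the Simson–Wallace line of the cyclic quadrangle). -/

import Mathlib

/-
The foot of the perpendicular from `p` onto the Simson line of the triangle `x y u` is
`p - (p - x) (p - y) (p - u) / (4 p²)`. So the foot for the triangle that omits the vertex `e` is
`p + K / (p - e)`, where `K = -(p - a) (p - b) (p - c) (p - d) / (4 p²)` does not depend on `e`.
Inversion at the point `p` of the unit circle maps that circle to a line (concretely,
`(p + e) / (p - e)` is purely imaginary for `‖e‖ = ‖p‖`), hence so does `e ↦ p + K / (p - e)`, and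
the four feet, the images of `a, b, c, d`, are collinear.
-/

open Complex

/-- Perpendicular foot from `p` to the line through two distinct points `z`, `w` of `ℂ`. -/
def IsFootOnLine (p z w f : ℂ) : Prop :=
  (∃ t : ℝ, f = z + t • (w - z)) ∧ ((starRingEnd ℂ) (w - z) * (p - f)).re = 0

/-- Perpendicular foot from `p` to the chord of the unit circle through `u` and `v`. -/
noncomputable def chordFoot (p u v : ℂ) : ℂ := (u + v + p - u * v * (starRingEnd ℂ p)) / 2

open ComplexConjugate Metric

theorem IsFootOnLine.unique {p z w f g : ℂ} (hzw : z ≠ w)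
    (hf : IsFootOnLine p z w f) (hg : IsFootOnLine p z w g) : f = g := by
  obtain ⟨⟨s, rfl⟩, hf⟩ := hf
  obtain ⟨⟨t, rfl⟩, hg⟩ := hg
  have hperp : inner ℝ (w - z) ((s - t) • (w - z)) = 0 := by
    have hsplit : (s - t) • (w - z) = (p - (z + t • (w - z))) - (p - (z + s • (w - z))) := by
      simp only [real_smul]; push_cast; ring
    rw [Complex.inner, mul_comm, hsplit, mul_sub, sub_re, hf, hg, sub_zero]
  rw [real_inner_smul_right, real_inner_self_eq_norm_sq, mul_eq_zero, sub_eq_zero] at hperp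
  rcases hperp with rfl | h
  · rfl
  · simp [sub_eq_zero, hzw.symm] at h

theorem re_add_div_sub_eq_zero_of_norm_eq {p e : ℂ} (h : ‖p‖ = ‖e‖) :
    ((p + e) / (p - e)).re = 0 := by
  have h2 : normSq p = normSq e := by rw [normSq_eq_norm_sq, normSq_eq_norm_sq, h]
  rw [normSq_apply, normSq_apply] at h2
  rw [div_re, ← add_div]
  simp only [add_re, sub_re, add_im, sub_im]
  rw [div_eq_zero_iff]; left
  linear_combination h2

theorem collinear_image_inv_sub_sphere (p c K : ℂ) (hp : p ≠ 0) :
    Collinear ℝ ((fun e => c + K * (p - e)⁻¹) '' (sphere 0 ‖p‖ \ {p})) := by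
  rw [collinear_iff_exists_forall_eq_smul_vadd]
  refine ⟨c + K / (2 * p), K / (2 * p) * I, ?_⟩
  rintro _ ⟨e, ⟨he, hep⟩, rfl⟩
  have hpe : p - e ≠ 0 := sub_ne_zero.2 (Ne.symm hep)
  refine ⟨((p + e) / (p - e)).im, ?_⟩
  have hI : (p + e) / (p - e) = ((p + e) / (p - e)).im * I := by
    have hre := re_add_div_sub_eq_zero_of_norm_eq (mem_sphere_zero_iff_norm.1 he).symm
    apply Complex.ext <;> simp [hre]
  rw [real_smul, vadd_eq_add, ← mul_assoc, mul_comm _ (K / _), mul_assoc, ← hI]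
  field_simp
  ring

theorem chordFoot_sub_chordFoot {p : ℂ} (hp : ‖p‖ = 1) (x y u : ℂ) :
    chordFoot p y u - chordFoot p x y = (u - x) * (p - y) / (2 * p) := by
  have hp0 : p ≠ 0 := norm_ne_zero_iff.1 (hp ▸ one_ne_zero)
  rw [chordFoot, chordFoot, ← inv_eq_conj hp]
  field_simp
  ring

theorem isFootOnLine_chordFoot {p x y u : ℂ} (hp : ‖p‖ = 1) (hx : ‖x‖ = 1) (hy : ‖y‖ = 1)
    (hu : ‖u‖ = 1) (hxu : x ≠ u) :
    IsFootOnLine p (chordFoot p x y) (chordFoot p y u)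
      (p - (p - x) * (p - y) * (p - u) / (4 * p ^ 2)) := by
  have hp0 : p ≠ 0 := norm_ne_zero_iff.1 (hp ▸ one_ne_zero)
  have hx0 : x ≠ 0 := norm_ne_zero_iff.1 (hx ▸ one_ne_zero)
  have hu0 : u ≠ 0 := norm_ne_zero_iff.1 (hu ▸ one_ne_zero)
  have hp' := (inv_eq_conj hp).symm
  have hx' := (inv_eq_conj hx).symm
  have hy' := (inv_eq_conj hy).symm
  have hu' := (inv_eq_conj hu).symm
  rw [IsFootOnLine, chordFoot_sub_chordFoot hp]
  constructor
  · set τ := (p - x) * (p + u) / (2 * p * (u - x))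
    have hτ_real : conj τ = τ := by
      simp only [τ, map_div₀, map_mul, map_sub, map_add, map_ofNat, hp', hx', hu']
      rw [inv_sub_inv hu0 hx0]
      field_simp
      ring
    refine ⟨τ.re, ?_⟩
    rw [real_smul, conj_eq_iff_re.1 hτ_real]
    simp only [τ, chordFoot, hp']
    field_simp
    ring
  · rw [← ofReal_eq_zero, re_eq_add_conj]
    simp only [map_div₀, map_mul, map_sub, map_pow, map_ofNat, map_inv₀, inv_inv,
      hp', hx', hu', hy']
    field_simp
    ring

theorem chordFoot_ne_chordFoot {p x y u : ℂ} (hp : ‖p‖ = 1) (hxu : x ≠ u) (hpy : p ≠ y) :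
    chordFoot p x y ≠ chordFoot p y u := by
  have hp0 : p ≠ 0 := norm_ne_zero_iff.1 (hp ▸ one_ne_zero)
  rw [ne_comm, ← sub_ne_zero, chordFoot_sub_chordFoot hp]
  exact div_ne_zero (mul_ne_zero (sub_ne_zero.2 hxu.symm) (sub_ne_zero.2 hpy))
    (mul_ne_zero two_ne_zero hp0)

theorem IsFootOnLine.eq_of_chordFoot {p x y u f : ℂ} (hp : ‖p‖ = 1) (hx : ‖x‖ = 1)
    (hy : ‖y‖ = 1) (hu : ‖u‖ = 1) (hxu : x ≠ u) (hpy : p ≠ y)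
    (hf : IsFootOnLine p (chordFoot p x y) (chordFoot p y u) f) :
    f = p - (p - x) * (p - y) * (p - u) / (4 * p ^ 2) :=
  hf.unique (chordFoot_ne_chordFoot hp hxu hpy) (isFootOnLine_chordFoot hp hx hy hu hxu)

/-- Simson–Wallace line of a cyclic quadrangle: for `a, b, c, d, p` on the unit circle,
the feet of the perpendiculars from `p` onto the Simson lines of the four triangles
`bcd`, `acd`, `abd`, `abc` are collinear. -/
theorem simson_line_of_quadrangle (a b c d p : ℂ)
    (ha : ‖a‖ = 1) (hb : ‖b‖ = 1) (hc : ‖c‖ = 1)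
    (hd : ‖d‖ = 1) (hp : ‖p‖ = 1)
    (hdist : [a, b, c, d].Pairwise (· ≠ ·))
    (hpv : p ≠ a ∧ p ≠ b ∧ p ≠ c ∧ p ≠ d)
    (h₁ h₂ h₃ h₄ : ℂ)
    (hh₁ : IsFootOnLine p (chordFoot p b c) (chordFoot p c d) h₁)
    (hh₂ : IsFootOnLine p (chordFoot p a c) (chordFoot p c d) h₂)
    (hh₃ : IsFootOnLine p (chordFoot p a b) (chordFoot p b d) h₃)
    (hh₄ : IsFootOnLine p (chordFoot p a b) (chordFoot p b c) h₄) :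
    Collinear ℝ ({h₁, h₂, h₃, h₄} : Set ℂ) := by
  obtain ⟨hpa, hpb, hpc, hpd⟩ := hpv
  simp only [List.pairwise_cons, List.mem_cons, List.not_mem_nil, forall_eq_or_imp] at hdist
  obtain ⟨⟨-, hac, had, -⟩, ⟨-, hbd, -⟩, -⟩ := hdist
  have hp0 : p ≠ 0 := norm_ne_zero_iff.1 (hp ▸ one_ne_zero)
  set K := -((p - a) * (p - b) * (p - c) * (p - d)) / (4 * p ^ 2) with hK
  have mem : ∀ {x y u e f : ℂ}, ‖x‖ = 1 → ‖y‖ = 1 → ‖u‖ = 1 → ‖e‖ = 1 → x ≠ u → p ≠ y →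
      p ≠ e → (p - x) * (p - y) * (p - u) * (p - e) = (p - a) * (p - b) * (p - c) * (p - d) →
      IsFootOnLine p (chordFoot p x y) (chordFoot p y u) f →
      f ∈ (fun e => p + K * (p - e)⁻¹) '' (sphere 0 ‖p‖ \ {p}) := by
    intro x y u e f hx hy hu he hxu hpy hpe hprod hf
    refine ⟨e, ⟨by rwa [mem_sphere_zero_iff_norm, hp], hpe.symm⟩, ?_⟩
    rw [hf.eq_of_chordFoot hp hx hy hu hxu hpy, hK, ← hprod]
    have := sub_ne_zero.2 hpe
    field_simp
    ring
  refine (collinear_image_inv_sub_sphere p p K hp0).subset ?_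
  simp only [Set.insert_subset_iff, Set.singleton_subset_iff]
  exact ⟨mem hb hc hd ha hbd hpc hpa (by ring) hh₁, mem ha hc hd hb had hpc hpb (by ring) hh₂,
    mem ha hb hd hc had hpb hpc (by ring) hh₃, mem ha hb hc hd hac hpb hpd (by ring) hh₄⟩
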